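/- Let a be an element of a unital *-ring R with inner inverse a⁻. Then the following are equivalent: (i) a is both group invertible and Moore-Penrose invertible; (ii) a is both core invertible and dual core invertible; (iii) u = a a* a + 1 − a a⁻ is invertible; (iv) v = a a* a + 1 − a⁻ a is invertible; (v) s = a* a² + 1 − a⁻ a is invertible; (vi) t = a² a* + 1 − a a⁻ is invertible. In this case, u⁻¹ a a* is the core inverse of a, a* a v⁻¹ is the dual core inverse of a, (t⁻¹ a²)* = (a² s⁻¹)* is the Moore-Penrose inverse of a, and (a a* t⁻¹)² a = a (s⁻¹ a* a)² is the group inverse of a. -/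
import Mathlib


/-- `x` is a group inverse of `a`. -/
def IsGroupInverse {R : Type*} [Ring R] (a x : R) : Prop :=
  a * x * a = a ∧ x * a * x = x ∧ a * x = x * a

/-- `x` is a Moore-Penrose inverse of `a`. -/
def IsMPInverse {R : Type*} [Ring R] [StarRing R] (a x : R) : Prop :=
  a * x * a = a ∧ x * a * x = x ∧ star (a * x) = a * x ∧ star (x * a) = x * a

/-- `x` is a core inverse of `a`. -/
def IsCoreInverse {R : Type*} [Ring R] [StarRing R] (a x : R) : Prop :=
  a * x * a = a ∧ x * a * x = x ∧ star (a * x) = a * x ∧ x * a ^ 2 = a ∧ a * x ^ 2 = x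

/-- `x` is a dual core inverse of `a`. -/
def IsDualCoreInverse {R : Type*} [Ring R] [StarRing R] (a x : R) : Prop :=
  a * x * a = a ∧ x * a * x = x ∧ star (x * a) = x * a ∧ a ^ 2 * x = a ∧ x ^ 2 * a = x

set_option linter.unusedSectionVars false
set_option maxHeartbeats 1000000

section Helpers
variable {R : Type*} [Ring R] [StarRing R]

lemma jacobson {x y w : R} (h1 : w * (1 + x * y) = 1) (h2 : (1 + x * y) * w = 1) :
    (1 - y * w * x) * (1 + y * x) = 1 ∧ (1 + y * x) * (1 - y * w * x) = 1 := by
  constructor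
  · calc (1 - y * w * x) * (1 + y * x)
        = 1 + y * x - y * (w * (1 + x * y)) * x := by noncomm_ring
      _ = 1 := by rw [h1]; noncomm_ring
  · calc (1 + y * x) * (1 - y * w * x)
        = 1 + y * x - y * ((1 + x * y) * w) * x := by noncomm_ring
      _ = 1 := by rw [h2]; noncomm_ring

lemma isUnit_one_add_comm {x y : R} (h : IsUnit (1 + x * y)) : IsUnit (1 + y * x) := by
  obtain ⟨v, hv⟩ := h
  have h1 : (↑v⁻¹ : R) * (1 + x * y) = 1 := by rw [← hv]; exact v.inv_mul
  have h2 : (1 + x * y) * (↑v⁻¹ : R) = 1 := by rw [← hv]; exact v.mul_inv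
  obtain ⟨j1, j2⟩ := jacobson h1 h2
  exact ⟨⟨1 + y * x, 1 - y * ↑v⁻¹ * x, j2, j1⟩, rfl⟩

lemma group_star {a g : R} (h : IsGroupInverse a g) : IsGroupInverse (star a) (star g) := by
  obtain ⟨h1, h2, h3⟩ := h
  refine ⟨?_, ?_, ?_⟩
  · simpa [star_mul, mul_assoc] using congrArg star h1
  · simpa [star_mul, mul_assoc] using congrArg star h2
  · rw [← star_mul, ← star_mul, h3]

lemma mp_star {a m : R} (h : IsMPInverse a m) : IsMPInverse (star a) (star m) := by
  obtain ⟨h1, h2, h3, h4⟩ := h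
  refine ⟨?_, ?_, ?_, ?_⟩
  · simpa [star_mul, mul_assoc] using congrArg star h1
  · simpa [star_mul, mul_assoc] using congrArg star h2
  · rw [← star_mul, star_star, h4]
  · rw [← star_mul, star_star, h3]

lemma mp_of_13_14 {a x y : R} (h13a : a * x * a = a) (h13b : star (a * x) = a * x)
    (h14a : a * y * a = a) (h14b : star (y * a) = y * a) : IsMPInverse a (y * a * x) := by
  refine ⟨?_, ?_, ?_, ?_⟩
  · calc a * (y * a * x) * a = (a * y * a) * (x * a) := by noncomm_ring
      _ = a * (x * a) := by rw [h14a]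
      _ = a * x * a := by noncomm_ring
      _ = a := h13a
  · calc (y * a * x) * a * (y * a * x)
        = y * (a * x * a) * (y * a * x) := by noncomm_ring
      _ = y * a * (y * a * x) := by rw [h13a]
      _ = y * (a * y * a) * x := by noncomm_ring
      _ = y * a * x := by rw [h14a]
  · have e : a * (y * a * x) = a * x := by
      calc a * (y * a * x) = (a * y * a) * x := by noncomm_ring
        _ = a * x := by rw [h14a]
    rw [e]; exact h13b
  · have e : (y * a * x) * a = y * a := by
      calc (y * a * x) * a = y * (a * x * a) := by noncomm_ring
        _ = y * a := by rw [h13a]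
    rw [e]; exact h14b

lemma group_of_core {a x : R} (h : IsCoreInverse a x) : IsGroupInverse a (x ^ 2 * a) := by
  obtain ⟨h1, h2, h3, h4, h5⟩ := h
  refine ⟨?_, ?_, ?_⟩
  · calc a * (x ^ 2 * a) * a = (a * x ^ 2) * a ^ 2 := by noncomm_ring
      _ = x * a ^ 2 := by rw [h5]
      _ = a := h4
  · calc (x ^ 2 * a) * a * (x ^ 2 * a)
        = x ^ 2 * (a * (a * x ^ 2)) * a := by noncomm_ring
      _ = x ^ 2 * (a * x) * a := by rw [h5]
      _ = x * (x * a * x) * a := by noncomm_ring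
      _ = x * x * a := by rw [h2]
      _ = x ^ 2 * a := by noncomm_ring
  · calc a * (x ^ 2 * a) = (a * x ^ 2) * a := by noncomm_ring
      _ = x * a := by rw [h5]
      _ = x * (x * a ^ 2) := by rw [h4]
      _ = (x ^ 2 * a) * a := by noncomm_ring

lemma dual_of_core_star {a x : R} (h : IsCoreInverse (star a) x) :
    IsDualCoreInverse a (star x) := by
  obtain ⟨h1, h2, h3, h4, h5⟩ := h
  refine ⟨?_, ?_, ?_, ?_, ?_⟩
  · simpa [star_mul, star_star, mul_assoc] using congrArg star h1
  · simpa [star_mul, star_star, mul_assoc] using congrArg star h2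
  · have h3' : star x * a = star a * x := by
      simpa [star_mul, star_star] using h3
    rw [star_mul, star_star, h3']
  · simpa [star_mul, star_pow, star_star, mul_assoc] using congrArg star h4
  · simpa [star_mul, star_pow, star_star, mul_assoc] using congrArg star h5


lemma core_of_gm {a g m : R} (hg : IsGroupInverse a g) (hm : IsMPInverse a m) :
    IsCoreInverse a (g * a * m) := by
  obtain ⟨hg1, hg2, hg3⟩ := hg
  obtain ⟨hm1, hm2, hm3, hm4⟩ := hm
  have hga2 : g * a * a = a := by
    calc g * a * a = a * g * a := by rw [← hg3]
      _ = a := hg1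
  refine ⟨?_, ?_, ?_, ?_, ?_⟩
  · calc a * (g * a * m) * a = (a * g * a) * (m * a) := by noncomm_ring
      _ = a * (m * a) := by rw [hg1]
      _ = a * m * a := by noncomm_ring
      _ = a := hm1
  · calc (g * a * m) * a * (g * a * m)
        = g * ((a * m * a) * g) * (a * m) := by noncomm_ring
      _ = g * (a * g) * (a * m) := by rw [hm1]
      _ = (g * a * g) * (a * m) := by noncomm_ring
      _ = g * (a * m) := by rw [hg2]
      _ = g * a * m := by noncomm_ring
  · have e : a * (g * a * m) = a * m := by
      calc a * (g * a * m) = (a * g * a) * m := by noncomm_ring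
        _ = a * m := by rw [hg1]
    rw [e]; exact hm3
  · calc (g * a * m) * a ^ 2 = g * ((a * m * a) * a) := by noncomm_ring
      _ = g * (a * a) := by rw [hm1]
      _ = g * a * a := by noncomm_ring
      _ = a := hga2
  · calc a * (g * a * m) ^ 2 = (a * g * a) * (m * (g * a) * m) := by noncomm_ring
      _ = a * (m * (g * a) * m) := by rw [hg1]
      _ = a * (m * (a * g) * m) := by rw [← hg3]
      _ = (a * m * a) * (g * m) := by noncomm_ring
      _ = a * (g * m) := by rw [hm1]
      _ = (a * g) * m := by noncomm_ring
      _ = (g * a) * m := by rw [hg3]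
      _ = g * a * m := by noncomm_ring

lemma unit_aux {a c g m : R} (hc : a * c * a = a) (hg : IsGroupInverse a g)
    (hm : IsMPInverse a m) :
    ∃ W : R, W * (a * star a * a + 1 - a * c) = 1 ∧ (a * star a * a + 1 - a * c) * W = 1 := by
  obtain ⟨hg1, hg2, hg3⟩ := hg
  obtain ⟨hm1, hm2, hm3, hm4⟩ := hm
  have hga2 : g * a * a = a := by
    calc g * a * a = a * g * a := by rw [← hg3]
      _ = a := hg1
  have hagg : a * g * g = g := by
    calc a * g * g = (g * a) * g := by rw [hg3]
      _ = g := hg2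
  have hacg : a * c * g = g := by
    calc a * c * g = a * c * (a * g * g) := by rw [hagg]
      _ = (a * c * a) * (g * g) := by noncomm_ring
      _ = a * (g * g) := by rw [hc]
      _ = a * g * g := by noncomm_ring
      _ = g := hagg
  have hsm : star m * star a = a * m := by rw [← star_mul, hm3]
  have hsm4 : star a * star m = m * a := by rw [← star_mul, hm4]
  have hmm1 : a * m * star m = star m := by
    have hX : star (a * m * star m) = m := by
      rw [star_mul, star_star, hm3]
      rw [← mul_assoc]; exact hm2
    calc a * m * star m = star (star (a * m * star m)) := (star_star _).symm
      _ = star m := by rw [hX]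
  have hmma : star m * m * a = star m := by
    have hX : star (star m * m * a) = m := by
      rw [star_mul, star_mul, star_star]
      calc star a * (star m * m) = (star a * star m) * m := by rw [mul_assoc]
        _ = (m * a) * m := by rw [hsm4]
        _ = m := hm2
    calc star m * m * a = star (star (star m * m * a)) := (star_star _).symm
      _ = star m := by rw [hX]
  -- left inverse computation pieces
  have h_t1 : a * c * (a * star a * a + 1 - a * c) = a * star a * a := by
    calc a * c * (a * star a * a + 1 - a * c)
        = (a * c * a) * (star a * a) + a * c - (a * c * a) * c := by noncomm_ring
      _ = a * (star a * a) + a * c - a * c := by rw [hc]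
      _ = a * star a * a := by noncomm_ring
  have h_t2 : g * a * m * star m * m * (a * star a * a) = g * a := by
    calc g * a * m * star m * m * (a * star a * a)
        = (g * a * m) * ((star m * m * a) * (star a * a)) := by noncomm_ring
      _ = (g * a * m) * (star m * (star a * a)) := by rw [hmma]
      _ = (g * a * m) * ((star m * star a) * a) := by noncomm_ring
      _ = (g * a * m) * ((a * m) * a) := by rw [hsm]
      _ = (g * a) * ((m * a) * (m * a)) := by noncomm_ring
      _ = g * ((a * m * a) * (m * a)) := by noncomm_ring
      _ = g * (a * (m * a)) := by rw [hm1]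
      _ = g * (a * m * a) := by noncomm_ring
      _ = g * a := by rw [hm1]
  have h_t3 : g * a * (a * star a * a + 1 - a * c) = a * star a * a + g * a - a * c := by
    calc g * a * (a * star a * a + 1 - a * c)
        = (g * a * a) * (star a * a) + g * a - (g * a * a) * c := by noncomm_ring
      _ = a * (star a * a) + g * a - a * c := by rw [hga2]
      _ = a * star a * a + g * a - a * c := by noncomm_ring
  -- right inverse pieces
  have h_t4 : (a * star a * a + 1 - a * c) * (g * a) = a * star a * a := by
    calc (a * star a * a + 1 - a * c) * (g * a)
        = (a * star a) * (a * g * a) + g * a - (a * c * g) * a := by noncomm_ring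
      _ = (a * star a) * a + g * a - g * a := by rw [hg1, hacg]
      _ = a * star a * a := by noncomm_ring
  have h_t5 : (a * star a * a) * (g * a * m * star m * m) = a * m := by
    calc (a * star a * a) * (g * a * m * star m * m)
        = (a * star a) * ((a * g * a) * (m * star m * m)) := by noncomm_ring
      _ = (a * star a) * (a * (m * star m * m)) := by rw [hg1]
      _ = a * star a * (a * m * star m) * m := by noncomm_ring
      _ = a * star a * star m * m := by rw [hmm1]
      _ = a * (star a * star m) * m := by noncomm_ring
      _ = a * (m * a) * m := by rw [hsm4]
      _ = a * (m * a * m) := by noncomm_ring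
      _ = a * m := by rw [hm2]
  have hacy : a * c * (g * a * m * star m * m) = g * a * m * star m * m := by
    calc a * c * (g * a * m * star m * m)
        = (a * c * g) * (a * m * star m * m) := by noncomm_ring
      _ = g * (a * m * star m * m) := by rw [hacg]
      _ = g * a * m * star m * m := by noncomm_ring
  have h_t7 : (a * star a * a + 1 - a * c) * (g * a * m * star m * m) = a * m := by
    calc (a * star a * a + 1 - a * c) * (g * a * m * star m * m)
        = (a * star a * a) * (g * a * m * star m * m) + (g * a * m * star m * m)
            - a * c * (g * a * m * star m * m) := by noncomm_ring
      _ = a * m + (g * a * m * star m * m) - (g * a * m * star m * m) := by rw [h_t5, hacy]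
      _ = a * m := by noncomm_ring
  have hamac : a * m * (a * c) = a * c := by
    calc a * m * (a * c) = (a * m * a) * c := by noncomm_ring
      _ = a * c := by rw [hm1]
  refine ⟨g * a * m * star m * m * (a * c) + 1 - g * a, ?_, ?_⟩
  · calc (g * a * m * star m * m * (a * c) + 1 - g * a) * (a * star a * a + 1 - a * c)
        = (g * a * m * star m * m) * (a * c * (a * star a * a + 1 - a * c))
            + (a * star a * a + 1 - a * c) - g * a * (a * star a * a + 1 - a * c) := by
          noncomm_ring
      _ = (g * a * m * star m * m) * (a * star a * a)
            + (a * star a * a + 1 - a * c) - (a * star a * a + g * a - a * c) := by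
          rw [h_t1, h_t3]
      _ = g * a * m * star m * m * (a * star a * a)
            + (a * star a * a + 1 - a * c) - (a * star a * a + g * a - a * c) := by
          noncomm_ring
      _ = g * a + (a * star a * a + 1 - a * c) - (a * star a * a + g * a - a * c) := by
          rw [h_t2]
      _ = 1 := by noncomm_ring
  · calc (a * star a * a + 1 - a * c) * (g * a * m * star m * m * (a * c) + 1 - g * a)
        = ((a * star a * a + 1 - a * c) * (g * a * m * star m * m)) * (a * c)
            + (a * star a * a + 1 - a * c)
            - (a * star a * a + 1 - a * c) * (g * a) := by noncomm_ring
      _ = (a * m) * (a * c) + (a * star a * a + 1 - a * c) - a * star a * a := by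
          rw [h_t7, h_t4]
      _ = a * m * (a * c) + (a * star a * a + 1 - a * c) - a * star a * a := by noncomm_ring
      _ = a * c + (a * star a * a + 1 - a * c) - a * star a * a := by rw [hamac]
      _ = 1 := by noncomm_ring


lemma coreInv_of_unit {a c w : R} (hc : a * c * a = a)
    (hw1 : w * (a * star a * a + 1 - a * c) = 1)
    (hw2 : (a * star a * a + 1 - a * c) * w = 1) :
    IsCoreInverse a (w * (a * star a)) ∧
      a * (star a * star w * star a) * a = a ∧
      star (star a * star w * star a * a) = star a * star w * star a * a := by
  have heu : (1 - a * c) * (a * star a * a + 1 - a * c) = 1 - a * c := by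
    calc (1 - a * c) * (a * star a * a + 1 - a * c)
        = (a - a * c * a) * (star a * a) + 1 - a * c - (a - a * c * a) * c := by noncomm_ring
      _ = 1 - a * c := by rw [hc]; noncomm_ring
  have F1 : (1 - a * c) * w = 1 - a * c := by
    calc (1 - a * c) * w
        = ((1 - a * c) * (a * star a * a + 1 - a * c)) * w := by rw [heu]
      _ = (1 - a * c) * ((a * star a * a + 1 - a * c) * w) := by rw [mul_assoc]
      _ = 1 - a * c := by rw [hw2, mul_one]
  have F2 : a * star a * a * w = a * c := by
    have h : a * star a * a * w + (1 - a * c) * w = 1 := by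
      calc a * star a * a * w + (1 - a * c) * w
          = (a * star a * a + 1 - a * c) * w := by noncomm_ring
        _ = 1 := hw2
    rw [F1] at h
    calc a * star a * a * w = a * star a * a * w + (1 - a * c) - (1 - a * c) := by abel
      _ = 1 - (1 - a * c) := by rw [h]
      _ = a * c := by abel
  have ax2 : (w * (a * star a)) * a * (w * (a * star a)) = w * (a * star a) := by
    calc (w * (a * star a)) * a * (w * (a * star a))
        = w * ((a * star a * a * w) * (a * star a)) := by noncomm_ring
      _ = w * ((a * c) * (a * star a)) := by rw [F2]
      _ = w * ((a * c * a) * star a) := by noncomm_ring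
      _ = w * (a * star a) := by rw [hc]
  have hua : (a * star a * a + 1 - a * c) * a = a * star a * a * a := by
    calc (a * star a * a + 1 - a * c) * a
        = a * star a * a * a + a - a * c * a := by noncomm_ring
      _ = a * star a * a * a + a - a := by rw [hc]
      _ = a * star a * a * a := by abel
  have ax4 : (w * (a * star a)) * a ^ 2 = a := by
    calc (w * (a * star a)) * a ^ 2 = w * (a * star a * a * a) := by noncomm_ring
      _ = w * ((a * star a * a + 1 - a * c) * a) := by rw [hua]
      _ = (w * (a * star a * a + 1 - a * c)) * a := (mul_assoc _ _ _).symm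
      _ = a := by rw [hw1, one_mul]
  have F5a : a * star a * a * w * a = a := by
    calc a * star a * a * w * a = (a * c) * a := by rw [F2]
      _ = a := hc
  have F5b : star a * star w * star a * (a * star a) = star a := by
    simpa [star_mul, mul_assoc] using congrArg star F5a
  have hQ : (star a * star w * star a * a) * (star a * a * w * a) = star a * a * w * a := by
    calc (star a * star w * star a * a) * (star a * a * w * a)
        = (star a * star w * star a * (a * star a)) * (a * w * a) := by noncomm_ring
      _ = star a * (a * w * a) := by rw [F5b]
      _ = star a * a * w * a := by noncomm_ring
  have hstarQ : star (star a * star w * star a * a) = star a * a * w * a := by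
    simp [star_mul, star_star, mul_assoc]
  have hPstar : star (star a * a * w * a) = star a * star w * star a * a := by
    simp [star_mul, star_star, mul_assoc]
  have h2 : star (star a * a * w * a) = star a * a * w * a := by
    have hx : star ((star a * star w * star a * a) * (star a * a * w * a))
        = (star a * star w * star a * a) * (star a * a * w * a) := by
      rw [star_mul, hstarQ, hPstar]
    rw [hQ] at hx
    exact hx
  have R7' : star a * a * w * a = star a * star w * star a * a := by
    calc star a * a * w * a = star (star a * a * w * a) := h2.symm
      _ = star a * star w * star a * a := hPstar
  have F6a : a * (star a * a * w * a) = a := by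
    calc a * (star a * a * w * a) = (a * star a * a * w) * a := by noncomm_ring
      _ = (a * c) * a := by rw [F2]
      _ = a := hc
  have haya : a * (star a * star w * star a * a) = a := by
    rw [← R7']; exact F6a
  have F6b : star a * a * w * a * star a = star a := by
    have hx := congrArg star F6a
    rw [star_mul, h2] at hx
    exact hx
  have F6c : star a * a * w * a * star a * a = star a * a := by
    calc star a * a * w * a * star a * a = (star a * a * w * a * star a) * a := by noncomm_ring
      _ = star a * a := by rw [F6b]
  have F7 : a * w * a * star a * a = a := by
    calc a * w * a * star a * a
        = a * (w * a * star a * a) := by noncomm_ring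
      _ = (a * (star a * star w * star a * a)) * (w * a * star a * a) := by rw [haya]
      _ = a * (star a * star w * (star a * a * w * a * star a * a)) := by noncomm_ring
      _ = a * (star a * star w * (star a * a)) := by rw [F6c]
      _ = a * (star a * star w * star a * a) := by noncomm_ring
      _ = a := haya
  have ax1 : a * (w * (a * star a)) * a = a := by
    calc a * (w * (a * star a)) * a = a * w * a * star a * a := by noncomm_ring
      _ = a := F7
  have hps : star (a * (w * (a * star a))) = a * star a * star w * star a := by
    simp [star_mul, star_star, mul_assoc]
  have hTstar : star (a * star a * star w * star a) = a * (w * (a * star a)) := by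
    simp [star_mul, star_star, mul_assoc]
  have hp1 : (a * (w * (a * star a))) * (a * star a * star w * star a)
      = a * star a * star w * star a := by
    calc (a * (w * (a * star a))) * (a * star a * star w * star a)
        = (a * (w * (a * star a)) * a) * (star a * star w * star a) := by noncomm_ring
      _ = a * (star a * star w * star a) := by rw [ax1]
      _ = a * star a * star w * star a := by noncomm_ring
  have hpsa : a * star a * star w * star a * a = a := by
    calc a * star a * star w * star a * a
        = a * (star a * star w * star a * a) := by noncomm_ring
      _ = a := haya
  have hp2 : (a * star a * star w * star a) * (a * (w * (a * star a)))
      = a * (w * (a * star a)) := by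
    calc (a * star a * star w * star a) * (a * (w * (a * star a)))
        = (a * star a * star w * star a * a) * (w * (a * star a)) := by noncomm_ring
      _ = a * (w * (a * star a)) := by rw [hpsa]
  have ax3 : star (a * (w * (a * star a))) = a * (w * (a * star a)) := by
    have e1 : star (a * (w * (a * star a)))
        = star (a * (w * (a * star a))) * (a * (w * (a * star a))) := by
      conv_lhs => rw [← hp2]
      rw [star_mul, hTstar]
    calc star (a * (w * (a * star a)))
        = star (a * (w * (a * star a))) * (a * (w * (a * star a))) := e1
      _ = (a * star a * star w * star a) * (a * (w * (a * star a))) := by rw [hps]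
      _ = a * (w * (a * star a)) := hp2
  have hpu : (a * (w * (a * star a))) * (a * star a * a + 1 - a * c)
      = (a * star a * a + 1 - a * c) + a * (w * (a * star a)) - 1 := by
    calc (a * (w * (a * star a))) * (a * star a * a + 1 - a * c)
        = (a * (w * (a * star a)) * a) * (star a * a) + a * (w * (a * star a))
            - (a * (w * (a * star a)) * a) * c := by noncomm_ring
      _ = a * (star a * a) + a * (w * (a * star a)) - a * c := by rw [ax1]
      _ = (a * star a * a + 1 - a * c) + a * (w * (a * star a)) - 1 := by noncomm_ring
  have hp_eq : a * (w * (a * star a)) = 1 + (a * (w * (a * star a))) * w - w := by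
    calc a * (w * (a * star a))
        = (a * (w * (a * star a))) * ((a * star a * a + 1 - a * c) * w) := by
          rw [hw2, mul_one]
      _ = ((a * (w * (a * star a))) * (a * star a * a + 1 - a * c)) * w :=
          (mul_assoc _ _ _).symm
      _ = ((a * star a * a + 1 - a * c) + a * (w * (a * star a)) - 1) * w := by rw [hpu]
      _ = (a * star a * a + 1 - a * c) * w + (a * (w * (a * star a))) * w - w := by
          noncomm_ring
      _ = 1 + (a * (w * (a * star a))) * w - w := by rw [hw2]
  have hpw : (a * (w * (a * star a))) * w = a * (w * (a * star a)) - 1 + w := by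
    have h4 : (1 : R) + (a * (w * (a * star a))) * w - w = a * (w * (a * star a)) :=
      hp_eq.symm
    calc (a * (w * (a * star a))) * w
        = (1 + (a * (w * (a * star a))) * w - w) - 1 + w := by abel
      _ = a * (w * (a * star a)) - 1 + w := by rw [h4]
  have ax5 : a * (w * (a * star a)) ^ 2 = w * (a * star a) := by
    calc a * (w * (a * star a)) ^ 2
        = ((a * (w * (a * star a))) * w) * (a * star a) := by noncomm_ring
      _ = (a * (w * (a * star a)) - 1 + w) * (a * star a) := by rw [hpw]
      _ = (a * (w * (a * star a)) * a) * star a - a * star a + w * (a * star a) := by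
          noncomm_ring
      _ = a * star a - a * star a + w * (a * star a) := by rw [ax1]
      _ = w * (a * star a) := by noncomm_ring
  have h14a : a * (star a * star w * star a) * a = a := by
    calc a * (star a * star w * star a) * a
        = a * (star a * star w * star a * a) := by noncomm_ring
      _ = a := haya
  have h14b : star (star a * star w * star a * a) = star a * star w * star a * a := by
    rw [hstarQ]; exact R7'
  exact ⟨⟨ax1, ax2, ax3, ax4, ax5⟩, h14a, h14b⟩


/-- t · m* = a², for m the MP inverse. -/
lemma t_mul_star_mp {a c m : R} (hc : a * c * a = a) (hm : IsMPInverse a m) :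
    (a ^ 2 * star a + 1 - a * c) * star m = a ^ 2 := by
  obtain ⟨hm1, hm2, hm3, hm4⟩ := hm
  have hsm4 : star a * star m = m * a := by rw [← star_mul, hm4]
  have hmm1 : a * m * star m = star m := by
    have hX : star (a * m * star m) = m := by
      rw [star_mul, star_star, hm3]
      rw [← mul_assoc]; exact hm2
    calc a * m * star m = star (star (a * m * star m)) := (star_star _).symm
      _ = star m := by rw [hX]
  have hacsm : a * c * star m = star m := by
    calc a * c * star m = a * c * (a * m * star m) := by rw [hmm1]
      _ = (a * c * a) * (m * star m) := by noncomm_ring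
      _ = a * (m * star m) := by rw [hc]
      _ = a * m * star m := by noncomm_ring
      _ = star m := hmm1
  calc (a ^ 2 * star a + 1 - a * c) * star m
      = a * a * (star a * star m) + star m - a * c * star m := by noncomm_ring
    _ = a * a * (m * a) + star m - star m := by rw [hsm4, hacsm]
    _ = a * (a * m * a) := by noncomm_ring
    _ = a * a := by rw [hm1]
    _ = a ^ 2 := by noncomm_ring

lemma t_a_sq {a c : R} (hc : a * c * a = a) :
    (a ^ 2 * star a + 1 - a * c) * a ^ 2 = a ^ 2 * (star a * a ^ 2 + 1 - c * a) := by
  calc (a ^ 2 * star a + 1 - a * c) * a ^ 2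
      = a * a * (star a * (a * a)) + a * a - (a * c * a) * a := by noncomm_ring
    _ = a * a * (star a * (a * a)) + a * a - a * a := by rw [hc]
    _ = a * a * (star a * (a * a)) + a * a - a * (a * c * a) := by rw [hc]
    _ = a ^ 2 * (star a * a ^ 2 + 1 - c * a) := by noncomm_ring

lemma wt_eq {a c g wt : R} (hc : a * c * a = a) (hg : IsGroupInverse a g)
    (hwt2 : (a ^ 2 * star a + 1 - a * c) * wt = 1) :
    a * star a * wt = g * (a * c) := by
  obtain ⟨hg1, hg2, hg3⟩ := hg
  have hga2 : g * a * a = a := by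
    calc g * a * a = a * g * a := by rw [← hg3]
      _ = a := hg1
  have hqt : (g * (a * c)) * (a ^ 2 * star a + 1 - a * c) = a * star a := by
    calc (g * (a * c)) * (a ^ 2 * star a + 1 - a * c)
        = g * ((a * c * a) * (a * star a)) + g * (a * c) - g * ((a * c * a) * c) := by
          noncomm_ring
      _ = g * (a * (a * star a)) + g * (a * c) - g * (a * c) := by rw [hc]
      _ = g * a * a * star a := by noncomm_ring
      _ = a * star a := by rw [hga2]
  calc a * star a * wt
      = ((g * (a * c)) * (a ^ 2 * star a + 1 - a * c)) * wt := by rw [hqt]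
    _ = (g * (a * c)) * ((a ^ 2 * star a + 1 - a * c) * wt) := by rw [mul_assoc]
    _ = g * (a * c) := by rw [hwt2, mul_one]

lemma gac_sq {a c g : R} (hc : a * c * a = a) (hg : IsGroupInverse a g) :
    (g * (a * c)) ^ 2 * a = g := by
  obtain ⟨hg1, hg2, hg3⟩ := hg
  have hagg : a * g * g = g := by
    calc a * g * g = (g * a) * g := by rw [hg3]
      _ = g := hg2
  have hacg : a * c * g = g := by
    calc a * c * g = a * c * (a * g * g) := by rw [hagg]
      _ = (a * c * a) * (g * g) := by noncomm_ring
      _ = a * (g * g) := by rw [hc]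
      _ = a * g * g := by noncomm_ring
      _ = g := hagg
  have hgga : g * g * a = g := by
    calc g * g * a = g * (g * a) := by rw [mul_assoc]
      _ = g * (a * g) := by rw [← hg3]
      _ = g * a * g := by rw [mul_assoc]
      _ = g := hg2
  calc (g * (a * c)) ^ 2 * a = g * ((a * c * g) * (a * c * a)) := by noncomm_ring
    _ = g * (g * a) := by rw [hacg, hc]
    _ = g * g * a := by rw [mul_assoc]
    _ = g := hgga

lemma ws_eq {a c g ws : R} (hc : a * c * a = a) (hg : IsGroupInverse a g)
    (hws1 : ws * (star a * a ^ 2 + 1 - c * a) = 1) :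
    ws * (star a * a) = c * (a * g) := by
  obtain ⟨hg1, hg2, hg3⟩ := hg
  have hga2 : g * a * a = a := by
    calc g * a * a = a * g * a := by rw [← hg3]
      _ = a := hg1
  have haag : a * a * g = a := by
    calc a * a * g = a * (a * g) := by rw [mul_assoc]
      _ = a * (g * a) := by rw [hg3]
      _ = a * g * a := by rw [mul_assoc]
      _ = g * a * a := by rw [hg3]
      _ = a := hga2
  have hqs : (star a * a ^ 2 + 1 - c * a) * (c * (a * g)) = star a * a := by
    calc (star a * a ^ 2 + 1 - c * a) * (c * (a * g))
        = star a * a * ((a * c * a) * g) + c * (a * g) - c * ((a * c * a) * g) := by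
          noncomm_ring
      _ = star a * a * (a * g) + c * (a * g) - c * (a * g) := by rw [hc]
      _ = star a * (a * a * g) := by noncomm_ring
      _ = star a * a := by rw [haag]
  calc ws * (star a * a)
      = ws * ((star a * a ^ 2 + 1 - c * a) * (c * (a * g))) := by rw [hqs]
    _ = (ws * (star a * a ^ 2 + 1 - c * a)) * (c * (a * g)) := (mul_assoc _ _ _).symm
    _ = c * (a * g) := by rw [hws1, one_mul]

lemma a_cag_sq {a c g : R} (hc : a * c * a = a) (hg : IsGroupInverse a g) :
    a * (c * (a * g)) ^ 2 = g := by
  obtain ⟨hg1, hg2, hg3⟩ := hg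
  have hgga : g * g * a = g := by
    calc g * g * a = g * (g * a) := by rw [mul_assoc]
      _ = g * (a * g) := by rw [← hg3]
      _ = g * a * g := by rw [mul_assoc]
      _ = g := hg2
  calc a * (c * (a * g)) ^ 2
      = (a * c * a) * (g * (c * (a * g))) := by noncomm_ring
    _ = a * (g * (c * (a * g))) := by rw [hc]
    _ = (a * g) * (c * (a * g)) := by rw [← mul_assoc]
    _ = (g * a) * (c * (a * g)) := by rw [hg3]
    _ = g * ((a * c * a) * g) := by noncomm_ring
    _ = g * (a * g) := by rw [hc]
    _ = g * (g * a) := by rw [hg3]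
    _ = g * g * a := by rw [mul_assoc]
    _ = g := hgga


lemma i_of_unit_u {a c : R} (hc : a * c * a = a)
    (hu : IsUnit (a * star a * a + 1 - a * c)) :
    (∃ x, IsGroupInverse a x) ∧ (∃ x, IsMPInverse a x) := by
  obtain ⟨v, hv⟩ := hu
  have h1 : (↑v⁻¹ : R) * (a * star a * a + 1 - a * c) = 1 := by rw [← hv]; exact v.inv_mul
  have h2 : (a * star a * a + 1 - a * c) * (↑v⁻¹ : R) = 1 := by rw [← hv]; exact v.mul_inv
  obtain ⟨core, h14a, h14b⟩ := coreInv_of_unit hc h1 h2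
  exact ⟨⟨_, group_of_core core⟩, ⟨_, mp_of_13_14 core.1 core.2.2.1 h14a h14b⟩⟩

end Helpers

/-- Theorem 5.7: characterizations of simultaneous group and Moore-Penrose
(equivalently, core and dual core) invertibility of a regular element `a` with
inner inverse `c`, together with the representations of the four inverses. -/
theorem stmt_16 {R : Type*} [Ring R] [StarRing R] (a c : R)
    (hc : a * c * a = a) :
    -- (i) ↔ (ii)
    (((∃ x, IsGroupInverse a x) ∧ (∃ x, IsMPInverse a x)) ↔
      ((∃ x, IsCoreInverse a x) ∧ (∃ x, IsDualCoreInverse a x))) ∧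
    -- (i) ↔ (iii)
    (((∃ x, IsGroupInverse a x) ∧ (∃ x, IsMPInverse a x)) ↔
      IsUnit (a * star a * a + 1 - a * c)) ∧
    -- (i) ↔ (iv)
    (((∃ x, IsGroupInverse a x) ∧ (∃ x, IsMPInverse a x)) ↔
      IsUnit (a * star a * a + 1 - c * a)) ∧
    -- (i) ↔ (v)
    (((∃ x, IsGroupInverse a x) ∧ (∃ x, IsMPInverse a x)) ↔
      IsUnit (star a * a ^ 2 + 1 - c * a)) ∧
    -- (i) ↔ (vi)
    (((∃ x, IsGroupInverse a x) ∧ (∃ x, IsMPInverse a x)) ↔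
      IsUnit (a ^ 2 * star a + 1 - a * c)) ∧
    -- core inverse: u⁻¹ a a*
    (∀ w, w * (a * star a * a + 1 - a * c) = 1 →
      (a * star a * a + 1 - a * c) * w = 1 →
      IsCoreInverse a (w * (a * star a))) ∧
    -- dual core inverse: a* a v⁻¹
    (∀ w, w * (a * star a * a + 1 - c * a) = 1 →
      (a * star a * a + 1 - c * a) * w = 1 →
      IsDualCoreInverse a (star a * a * w)) ∧
    -- Moore-Penrose inverse: (t⁻¹ a²)* = (a² s⁻¹)*
    -- and group inverse: (a a* t⁻¹)² a = a (s⁻¹ a* a)²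
    (∀ ws wt, ws * (star a * a ^ 2 + 1 - c * a) = 1 →
      (star a * a ^ 2 + 1 - c * a) * ws = 1 →
      wt * (a ^ 2 * star a + 1 - a * c) = 1 →
      (a ^ 2 * star a + 1 - a * c) * wt = 1 →
      IsMPInverse a (star (wt * a ^ 2)) ∧
      star (wt * a ^ 2) = star (a ^ 2 * ws) ∧
      IsGroupInverse a ((a * star a * wt) ^ 2 * a) ∧
      (a * star a * wt) ^ 2 * a = a * (ws * (star a * a)) ^ 2) := by
  have hueq : a * star a * a + 1 - a * c = 1 + a * (star a * a - c) := by noncomm_ring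
  have hseq : star a * a ^ 2 + 1 - c * a = 1 + (star a * a - c) * a := by noncomm_ring
  have hveq : a * star a * a + 1 - c * a = 1 + (a * star a - c) * a := by noncomm_ring
  have hteq : a ^ 2 * star a + 1 - a * c = 1 + a * (a * star a - c) := by noncomm_ring
  have hc' : star a * star c * star a = star a := by
    simpa [star_mul, mul_assoc] using congrArg star hc
  have hustar : star (a * star a * a + 1 - c * a)
      = star a * star (star a) * star a + 1 - star a * star c := by
    simp [star_sub, star_add, star_mul, star_one, star_star, mul_assoc]
  have Hu : ((∃ x, IsGroupInverse a x) ∧ (∃ x, IsMPInverse a x)) ↔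
      IsUnit (a * star a * a + 1 - a * c) := by
    constructor
    · rintro ⟨⟨g, hg⟩, ⟨m, hm⟩⟩
      obtain ⟨W, hWu, hUW⟩ := unit_aux hc hg hm
      exact ⟨⟨_, W, hUW, hWu⟩, rfl⟩
    · exact i_of_unit_u hc
  have star_equiv : ((∃ x, IsGroupInverse a x) ∧ (∃ x, IsMPInverse a x)) ↔
      ((∃ x, IsGroupInverse (star a) x) ∧ (∃ x, IsMPInverse (star a) x)) := by
    constructor
    · rintro ⟨⟨g, hg⟩, ⟨m, hm⟩⟩
      exact ⟨⟨_, group_star hg⟩, ⟨_, mp_star hm⟩⟩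
    · rintro ⟨⟨g, hg⟩, ⟨m, hm⟩⟩
      exact ⟨⟨_, by simpa [star_star] using group_star hg⟩,
             ⟨_, by simpa [star_star] using mp_star hm⟩⟩
  have Hustar : ((∃ x, IsGroupInverse (star a) x) ∧ (∃ x, IsMPInverse (star a) x)) ↔
      IsUnit (star a * star (star a) * star a + 1 - star a * star c) := by
    constructor
    · rintro ⟨⟨g, hg⟩, ⟨m, hm⟩⟩
      obtain ⟨W, hWu, hUW⟩ := unit_aux hc' hg hm
      exact ⟨⟨_, W, hUW, hWu⟩, rfl⟩
    · exact i_of_unit_u hc'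
  have Hv : ((∃ x, IsGroupInverse a x) ∧ (∃ x, IsMPInverse a x)) ↔
      IsUnit (a * star a * a + 1 - c * a) := by
    rw [star_equiv, Hustar, ← hustar, isUnit_star]
  have Hs : ((∃ x, IsGroupInverse a x) ∧ (∃ x, IsMPInverse a x)) ↔
      IsUnit (star a * a ^ 2 + 1 - c * a) := by
    rw [Hu, hueq, hseq]
    exact ⟨isUnit_one_add_comm, isUnit_one_add_comm⟩
  have Ht : ((∃ x, IsGroupInverse a x) ∧ (∃ x, IsMPInverse a x)) ↔
      IsUnit (a ^ 2 * star a + 1 - a * c) := by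
    rw [Hv, hveq, hteq]
    exact ⟨isUnit_one_add_comm, isUnit_one_add_comm⟩
  have Hii : ((∃ x, IsGroupInverse a x) ∧ (∃ x, IsMPInverse a x)) ↔
      ((∃ x, IsCoreInverse a x) ∧ (∃ x, IsDualCoreInverse a x)) := by
    constructor
    · rintro ⟨⟨g, hg⟩, ⟨m, hm⟩⟩
      refine ⟨⟨g * a * m, core_of_gm hg hm⟩, ?_⟩
      have hcore' := core_of_gm (group_star hg) (mp_star hm)
      have hd := dual_of_core_star hcore'
      have e : star (star g * star a * star m) = m * a * g := by
        simp [star_mul, star_star, mul_assoc]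
      rw [e] at hd
      exact ⟨_, hd⟩
    · rintro ⟨⟨x, hx⟩, ⟨y, hy⟩⟩
      exact ⟨⟨_, group_of_core hx⟩, ⟨_, mp_of_13_14 hx.1 hx.2.2.1 hy.1 hy.2.2.1⟩⟩
  refine ⟨Hii, Hu, Hv, Hs, Ht, ?_, ?_, ?_⟩
  · -- core inverse formula
    intro w h1 h2
    exact (coreInv_of_unit hc h1 h2).1
  · -- dual core inverse formula
    intro w hv1 hv2
    have h1' : star w * (star a * star (star a) * star a + 1 - star a * star c) = 1 := by
      have h := congrArg star hv2
      rw [star_mul, hustar] at h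
      simpa using h
    have h2' : (star a * star (star a) * star a + 1 - star a * star c) * star w = 1 := by
      have h := congrArg star hv1
      rw [star_mul, hustar] at h
      simpa using h
    obtain ⟨hcore, -, -⟩ := coreInv_of_unit hc' h1' h2'
    have hd := dual_of_core_star hcore
    have e : star (star w * (star a * star (star a))) = star a * a * w := by
      simp [star_mul, star_star, mul_assoc]
    rw [e] at hd
    exact hd
  · -- MP and group inverse formulas
    intro ws wt hws1 hws2 hwt1 hwt2
    have hs1' := hws1; rw [hseq] at hs1'
    have hs2' := hws2; rw [hseq] at hs2'
    obtain ⟨ju1, ju2⟩ := jacobson hs1' hs2'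
    have hwu1 : (1 - a * ws * (star a * a - c)) * (a * star a * a + 1 - a * c) = 1 := by
      rw [hueq]; exact ju1
    have hwu2 : (a * star a * a + 1 - a * c) * (1 - a * ws * (star a * a - c)) = 1 := by
      rw [hueq]; exact ju2
    obtain ⟨core, h14a, h14b⟩ := coreInv_of_unit hc hwu1 hwu2
    have hgrp := group_of_core core
    have mp := mp_of_13_14 core.1 core.2.2.1 h14a h14b
    have hL8 := t_mul_star_mp hc mp
    have hwta : wt * a ^ 2
        = star (star a * star (1 - a * ws * (star a * a - c)) * star a * a
            * ((1 - a * ws * (star a * a - c)) * (a * star a))) := by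
      calc wt * a ^ 2
          = wt * ((a ^ 2 * star a + 1 - a * c) * _) := by rw [hL8]
        _ = (wt * (a ^ 2 * star a + 1 - a * c)) * _ := (mul_assoc _ _ _).symm
        _ = _ := by rw [hwt1, one_mul]
    have goal1 : IsMPInverse a (star (wt * a ^ 2)) := by
      rw [hwta, star_star]; exact mp
    have hwteq : wt * a ^ 2 = a ^ 2 * ws := by
      calc wt * a ^ 2
          = wt * a ^ 2 * ((star a * a ^ 2 + 1 - c * a) * ws) := by rw [hws2, mul_one]
        _ = wt * ((a ^ 2 * (star a * a ^ 2 + 1 - c * a)) * ws) := by noncomm_ring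
        _ = wt * (((a ^ 2 * star a + 1 - a * c) * a ^ 2) * ws) := by rw [← t_a_sq hc]
        _ = (wt * (a ^ 2 * star a + 1 - a * c)) * (a ^ 2 * ws) := by noncomm_ring
        _ = 1 * (a ^ 2 * ws) := by rw [hwt1]
        _ = a ^ 2 * ws := by rw [one_mul]
    have goal2 : star (wt * a ^ 2) = star (a ^ 2 * ws) := by rw [hwteq]
    have heq3 : (a * star a * wt) ^ 2 * a
        = ((1 - a * ws * (star a * a - c)) * (a * star a)) ^ 2 * a := by
      calc (a * star a * wt) ^ 2 * a
          = (((1 - a * ws * (star a * a - c)) * (a * star a)) ^ 2 * a * (a * c)) ^ 2 * a := by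
            rw [wt_eq hc hgrp hwt2]
        _ = ((1 - a * ws * (star a * a - c)) * (a * star a)) ^ 2 * a := gac_sq hc hgrp
    have goal3 : IsGroupInverse a ((a * star a * wt) ^ 2 * a) := by
      rw [heq3]; exact hgrp
    have goal4 : (a * star a * wt) ^ 2 * a = a * (ws * (star a * a)) ^ 2 := by
      calc (a * star a * wt) ^ 2 * a
          = ((1 - a * ws * (star a * a - c)) * (a * star a)) ^ 2 * a := heq3
        _ = a * (c * (a * (((1 - a * ws * (star a * a - c)) * (a * star a)) ^ 2 * a))) ^ 2 :=
            (a_cag_sq hc hgrp).symm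
        _ = a * (ws * (star a * a)) ^ 2 := by rw [← ws_eq hc hgrp hws1]
    exact ⟨goal1, goal2, goal3, goal4⟩
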